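/- arXiv:0707.2190 — 5 statements merged into one kernel-verified Lean document; each statement's English description precedes it below -/
import Mathlib

section
/- If n is a positive integer with σ(n) = σ(n+1) and σ(n) is odd, then either n is a perfect square and n + 1 is twice a perfect square, or n is twice a perfect square and n + 1 is a perfect square. -/
open ArithmeticFunction
open scoped ArithmeticFunction.sigma

/-!
Since `σ` is multiplicative and `σ (p ^ e) = 1 + p + ⋯ + p ^ e` is a sum of `e + 1` odd terms for
an odd prime `p`, an odd value of `σ n` forces every odd prime to occur in `n` to an even power,
i.e. `n` is a square or twice a square. Two consecutive positive integers cannot both be squares,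
nor (by parity) both twice squares.
-/

theorem Nat.odd_geom_sum_iff {p e : ℕ} (hp : Odd p) :
    Odd (∑ i ∈ Finset.range (e + 1), p ^ i) ↔ Even e := by
  rw [Finset.odd_sum_iff_odd_card_odd, Finset.filter_true_of_mem fun i _ => hp.pow,
    Finset.card_range, Nat.odd_add_one, Nat.not_odd_iff_even]

theorem Nat.even_factorization_of_odd_sigma_one {n p : ℕ} (hσ : Odd (σ 1 n)) (hp2 : p ≠ 2) :
    Even (n.factorization p) := by
  have hn : n ≠ 0 := by rintro rfl; simp at hσ
  by_cases hp : p.Prime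
  · have hsplit : σ 1 n = σ 1 (p ^ n.factorization p) * σ 1 (n / p ^ n.factorization p) := by
      conv_lhs => rw [← Nat.ordProj_mul_ordCompl_eq_self n p]
      exact isMultiplicative_sigma.map_mul_of_coprime ((Nat.coprime_ordCompl hp hn).pow_left _)
    have hσp : Odd (σ 1 (p ^ n.factorization p)) := Nat.Odd.of_mul_left (hsplit ▸ hσ)
    rwa [sigma_one_apply_prime_pow hp, Nat.odd_geom_sum_iff (hp.odd_of_ne_two hp2)] at hσp
  · simp [Nat.factorization_eq_zero_of_not_prime _ hp]

theorem Nat.exists_eq_sq_of_forall_even_factorization {n : ℕ}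
    (h : ∀ p, Even (n.factorization p)) : ∃ k, n = k ^ 2 := by
  rcases eq_or_ne n 0 with rfl | hn
  · exact ⟨0, rfl⟩
  refine ⟨n.factorization.prod fun p e => p ^ (e / 2), ?_⟩
  conv_lhs => rw [← Nat.prod_factorization_pow_eq_self hn]
  rw [Finsupp.prod, Finsupp.prod, ← Finset.prod_pow]
  refine Finset.prod_congr rfl fun p _ => ?_
  rw [← pow_mul, Nat.div_mul_cancel (h p).two_dvd]

theorem Nat.exists_eq_sq_or_two_mul_sq_of_odd_sigma_one {n : ℕ} (hσ : Odd (σ 1 n)) :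
    (∃ k, n = k ^ 2) ∨ ∃ k, n = 2 * k ^ 2 := by
  obtain ⟨k, hk⟩ : ∃ k, n / 2 ^ n.factorization 2 = k ^ 2 := by
    refine Nat.exists_eq_sq_of_forall_even_factorization fun p => ?_
    rw [Nat.factorization_ordCompl, Finsupp.erase_apply]
    split_ifs with hp
    · exact Even.zero
    · exact Nat.even_factorization_of_odd_sigma_one hσ hp
  have hn := Nat.ordProj_mul_ordCompl_eq_self n 2
  rw [hk] at hn
  rcases Nat.even_or_odd' (n.factorization 2) with ⟨j, hj | hj⟩ <;> rw [hj] at hn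
  · exact .inl ⟨2 ^ j * k, by rw [← hn]; ring⟩
  · exact .inr ⟨2 ^ j * k, by rw [← hn]; ring⟩

/-- If `σ 1 n = σ 1 (n+1)` is odd, then `n` is a square and `n+1` is twice a square,
or `n` is twice a square and `n+1` is a square. -/
theorem square_or_two_mul_square_of_sigma_eq_odd (n : ℕ) (hn : 0 < n)
    (heq : σ 1 n = σ 1 (n + 1)) (hodd : Odd (σ 1 n)) :
    ((∃ k : ℤ, (n : ℤ) = k ^ 2) ∧ (∃ k : ℤ, (n : ℤ) + 1 = 2 * k ^ 2)) ∨
    ((∃ k : ℤ, (n : ℤ) = 2 * k ^ 2) ∧ (∃ k : ℤ, (n : ℤ) + 1 = k ^ 2)) := by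
  rcases Nat.exists_eq_sq_or_two_mul_sq_of_odd_sigma_one hodd with ⟨a, ha⟩ | ⟨a, ha⟩ <;>
    rcases Nat.exists_eq_sq_or_two_mul_sq_of_odd_sigma_one (heq ▸ hodd) with ⟨b, hb⟩ | ⟨b, hb⟩
  · have ha1 : 1 ≤ a := by nlinarith
    have hab : a < b := by nlinarith
    nlinarith
  · exact .inl ⟨⟨a, by exact_mod_cast ha⟩, ⟨b, by exact_mod_cast hb⟩⟩
  · exact .inr ⟨⟨a, by exact_mod_cast ha⟩, ⟨b, by exact_mod_cast hb⟩⟩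
  · omega
end

section
/- For every positive integer n satisfying σ(n) = σ(n+1), the value σ(n) is divisible by 2 or divisible by 3. -/
/-!
If `σ(n) = σ(n + 1)` is coprime to `6`, then each of `n`, `n + 1` is a perfect square, which is
impossible for `n > 0`. Indeed, for a prime power `p ^ k ∥ m` the factor `σ(p ^ k)` divides `σ(m)`.
For odd `p` it is a sum of `k + 1` odd terms, so `σ(m)` odd forces `k` even; for `p = 2` it is
`2 ^ (k + 1) - 1`, which is divisible by `3` when `k` is odd.
-/

open ArithmeticFunction
open scoped ArithmeticFunction.sigma

theorem Nat.isSquare_of_forall_even_factorization {m : ℕ} (h : ∀ p, Even (m.factorization p)) :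
    IsSquare m := by
  rcases eq_or_ne m 0 with rfl | hm
  · exact IsSquare.zero
  refine ⟨m.factorization.prod fun p k => p ^ (k / 2), ?_⟩
  rw [← Finsupp.prod_mul]
  conv_lhs => rw [← Nat.prod_factorization_pow_eq_self hm]
  refine Finsupp.prod_congr fun p _ => ?_
  rw [← pow_add, ← two_mul, Nat.mul_div_cancel' (h p).two_dvd]

theorem Nat.not_isSquare_add_one_of_isSquare {n : ℕ} (hn : 0 < n) (h : IsSquare n) :
    ¬ IsSquare (n + 1) := by
  obtain ⟨r, rfl⟩ := h
  have hr : 0 < r := Nat.pos_of_mul_pos_left hn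
  rintro ⟨s, hs⟩
  exact Nat.not_exists_sq (m := r) (by omega) (by nlinarith) ⟨s, hs.symm⟩

theorem ArithmeticFunction.IsMultiplicative.map_ordProj_dvd {R : Type*} [MonoidWithZero R]
    {f : ArithmeticFunction R} (hf : f.IsMultiplicative) (p m : ℕ) :
    f (ordProj[p] m) ∣ f m := by
  by_cases hp : p.Prime
  · rcases eq_or_ne m 0 with rfl | hm
    · simp
    conv_rhs => rw [← Nat.ordProj_mul_ordCompl_eq_self m p]
    rw [hf.map_mul_of_coprime ((Nat.coprime_ordCompl hp hm).pow_left _)]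
    exact dvd_mul_right _ _
  · rw [Nat.ordProj_of_not_prime m p hp, hf.map_one]
    exact one_dvd _

namespace ArithmeticFunction

theorem odd_sigma_one_prime_pow_iff {p k : ℕ} (hp : p.Prime) (hodd : Odd p) :
    Odd (σ 1 (p ^ k)) ↔ Even k := by
  rw [sigma_one_apply_prime_pow hp, Finset.odd_sum_iff_odd_card_odd]
  simp [hodd.pow, Nat.odd_add_one]

theorem three_dvd_sigma_one_two_pow {k : ℕ} (hk : Odd k) : 3 ∣ σ 1 (2 ^ k) := by
  obtain ⟨j, rfl⟩ := hk
  rw [sigma_one_apply_prime_pow Nat.prime_two, Nat.geomSum_eq le_rfl,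
    show 2 * j + 1 + 1 = 2 * (j + 1) by ring, pow_mul]
  simpa using Nat.sub_dvd_pow_sub_pow 4 1 (j + 1)

theorem even_factorization_of_odd_sigma_one {m p : ℕ} (hσ : Odd (σ 1 m)) (hp2 : p ≠ 2) :
    Even (m.factorization p) := by
  by_cases hp : p.Prime
  · rw [← odd_sigma_one_prime_pow_iff hp (hp.odd_of_ne_two hp2)]
    exact hσ.of_dvd_nat (isMultiplicative_sigma.map_ordProj_dvd p m)
  · simp [Nat.factorization_eq_zero_of_not_prime m hp]

theorem even_factorization_two_of_not_three_dvd_sigma_one {m : ℕ} (h3 : ¬ 3 ∣ σ 1 m) :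
    Even (m.factorization 2) :=
  Nat.not_odd_iff_even.mp fun hk =>
    h3 ((three_dvd_sigma_one_two_pow hk).trans
      (isMultiplicative_sigma.map_ordProj_dvd 2 m))

theorem isSquare_of_odd_sigma_one_of_not_three_dvd {m : ℕ} (h2 : Odd (σ 1 m))
    (h3 : ¬ 3 ∣ σ 1 m) : IsSquare m :=
  Nat.isSquare_of_forall_even_factorization fun p => by
    rcases eq_or_ne p 2 with rfl | hp2
    · exact even_factorization_two_of_not_three_dvd_sigma_one h3
    · exact even_factorization_of_odd_sigma_one h2 hp2

end ArithmeticFunction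

/-- For every solution of the Erdős–Sierpiński problem, `σ 1 n` is divisible by 2 or 3. -/
theorem two_or_three_dvd_sigma_of_sigma_eq (n : ℕ) (hn : 0 < n)
    (heq : σ 1 n = σ 1 (n + 1)) :
    2 ∣ σ 1 n ∨ 3 ∣ σ 1 n := by
  by_contra! ⟨h2, h3⟩
  have hodd : Odd (σ 1 n) := Nat.odd_iff.mpr (by omega)
  have hn_sq := isSquare_of_odd_sigma_one_of_not_three_dvd hodd h3
  have hn1_sq := isSquare_of_odd_sigma_one_of_not_three_dvd (heq ▸ hodd) (heq ▸ h3)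
  exact Nat.not_isSquare_add_one_of_isSquare hn hn_sq hn1_sq
end

section
/- Let n be a positive integer such that σ(n) = σ(n+1) and σ(n) is odd. Then either there exist integers x, y with n = 2·y^2, n + 1 = x^2 and x^2 − 2·y^2 = 1, or there exist integers x, y with n = x^2, n + 1 = 2·y^2 and x^2 − 2·y^2 = −1. -/
open ArithmeticFunction
open scoped ArithmeticFunction.sigma

/-!
`σ` is multiplicative, so if `σ m` is odd then so is `σ` of the odd part of `m`; all divisors of
that odd part being odd, it has an odd number `∏ (e_p + 1)` of divisors, hence is a square.
Hence each of `n`, `n + 1` is a square or twice a square. Two consecutive positive squares do not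
exist and `2 * k ^ 2 + 1` is odd, so one of them is a square and the other twice a square.
-/

namespace Nat

theorem exists_eq_sq_of_forall_even_factorization_s7 {b : ℕ}
    (h : ∀ p, Even (b.factorization p)) : ∃ k, b = k ^ 2 := by
  rcases eq_or_ne b 0 with rfl | hb
  · exact ⟨0, rfl⟩
  refine ⟨b.factorization.prod fun p e => p ^ (e / 2), ?_⟩
  conv_lhs => rw [← prod_factorization_pow_eq_self hb]
  rw [Finsupp.prod, Finsupp.prod, ← Finset.prod_pow]
  refine Finset.prod_congr rfl fun p _ => ?_
  rw [← pow_mul, Nat.div_mul_cancel (h p).two_dvd]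

theorem exists_eq_sq_of_odd_card_divisors {b : ℕ} (h : Odd b.divisors.card) :
    ∃ k, b = k ^ 2 := by
  rcases eq_or_ne b 0 with rfl | hb
  · exact ⟨0, rfl⟩
  refine exists_eq_sq_of_forall_even_factorization_s7 fun p => ?_
  by_cases hp : p ∈ b.primeFactors
  · have hdvd : b.factorization p + 1 ∣ b.divisors.card := by
      rw [card_divisors hb]
      exact Finset.dvd_prod_of_mem _ hp
    simpa [odd_add_one, not_odd_iff_even] using h.of_dvd_nat hdvd
  · rw [Finsupp.notMem_support_iff.mp (by rwa [support_factorization])]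
    exact Even.zero

theorem odd_sigma_one_iff_odd_card_divisors {b : ℕ} (hb : Odd b) :
    Odd (σ 1 b) ↔ Odd b.divisors.card := by
  rw [sigma_one_apply, Finset.odd_sum_iff_odd_card_odd,
    Finset.filter_true_of_mem fun d hd => hb.of_dvd_nat (dvd_of_mem_divisors hd)]

theorem exists_eq_sq_or_eq_two_mul_sq_of_odd_sigma_one {m : ℕ} (h : Odd (σ 1 m)) :
    (∃ k, m = k ^ 2) ∨ (∃ k, m = 2 * k ^ 2) := by
  rcases eq_or_ne m 0 with rfl | hm
  · exact .inl ⟨0, rfl⟩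
  obtain ⟨a, b, hb, rfl⟩ := exists_eq_two_pow_mul_odd hm
  have hcop : Coprime (2 ^ a) b := (coprime_two_left.mpr hb).pow_left a
  rw [isMultiplicative_sigma.map_mul_of_coprime hcop] at h
  obtain ⟨k, rfl⟩ := exists_eq_sq_of_odd_card_divisors <|
    (odd_sigma_one_iff_odd_card_divisors hb).mp (Nat.Odd.of_mul_right h)
  rcases even_or_odd' a with ⟨c, rfl | rfl⟩
  · exact .inl ⟨2 ^ c * k, by ring⟩
  · exact .inr ⟨2 ^ c * k, by ring⟩

theorem eq_zero_of_sq_add_one_eq_sq {k j : ℕ} (h : k ^ 2 + 1 = j ^ 2) : k = 0 := by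
  have hkj : k < j := by nlinarith
  nlinarith

end Nat

theorem pell_of_sigma_eq_odd_general (n : ℕ)
    (heq : σ 1 n = σ 1 (n + 1)) (hodd : Odd (σ 1 n)) :
    (∃ x y : ℤ, (n : ℤ) = 2 * y ^ 2 ∧ (n : ℤ) + 1 = x ^ 2 ∧ x ^ 2 - 2 * y ^ 2 = 1) ∨
    (∃ x y : ℤ, (n : ℤ) = x ^ 2 ∧ (n : ℤ) + 1 = 2 * y ^ 2 ∧ x ^ 2 - 2 * y ^ 2 = -1) := by
  have hn : n ≠ 0 := by
    rintro rfl
    simp at hodd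
  rcases Nat.exists_eq_sq_or_eq_two_mul_sq_of_odd_sigma_one hodd with ⟨k, hk⟩ | ⟨k, hk⟩ <;>
    rcases Nat.exists_eq_sq_or_eq_two_mul_sq_of_odd_sigma_one (heq ▸ hodd) with ⟨j, hj⟩ | ⟨j, hj⟩
  · obtain rfl := Nat.eq_zero_of_sq_add_one_eq_sq (hk ▸ hj)
    simp [hk] at hn
  · zify at hk hj
    exact .inr ⟨k, j, hk, hj, by linarith⟩
  · zify at hk hj
    exact .inl ⟨j, k, hk, hj, by linarith⟩
  · omega

/-- If `σ 1 n = σ 1 (n+1)` is odd, then `(x, y)` solving one of the two Pell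
equations `x² − 2y² = ±1` gives `n` and `n+1`. -/
theorem pell_of_sigma_eq_odd (n : ℕ) (hn : 0 < n)
    (heq : σ 1 n = σ 1 (n + 1)) (hodd : Odd (σ 1 n)) :
    (∃ x y : ℤ, (n : ℤ) = 2 * y ^ 2 ∧ (n : ℤ) + 1 = x ^ 2 ∧ x ^ 2 - 2 * y ^ 2 = 1) ∨
    (∃ x y : ℤ, (n : ℤ) = x ^ 2 ∧ (n : ℤ) + 1 = 2 * y ^ 2 ∧ x ^ 2 - 2 * y ^ 2 = -1) :=
  pell_of_sigma_eq_odd_general n heq hodd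
end

section
/- Let m be a positive integer and set q = 3^(m+1) − 4 and p = (3^m · q − 1)/2. If q and p are both prime numbers, then n = 2·p is a solution of the Erdős–Sierpiński problem with n + 1 = 3^m · q; that is, σ(2·p) = σ(3^m · q) and 2·p + 1 = 3^m · q. -/
/-!
Since `3^(m+1) = q + 4` is odd, so is `3^m q`, whence `2p + 1 = 3^m q`. As `p` is an odd prime
and `q` a prime different from 3, multiplicativity gives `σ(2p) = 3(p + 1)` and
`σ(3^m q) = σ(3^m)(q + 1)` with `2σ(3^m) = 3^(m+1) - 1 = q + 3`. Both sides, doubled, equal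
`3(3^m q + 1) = (q + 4)q + 3 = (q + 1)(q + 3)`.
-/

open ArithmeticFunction
open scoped ArithmeticFunction.sigma

namespace Nat.Prime

variable {p : ℕ} (hp : p.Prime)
include hp

theorem sigma_one_eq : σ 1 p = p + 1 := by
  simpa [Finset.sum_range_succ, add_comm] using sigma_one_apply_prime_pow (i := 1) hp

theorem sigma_one_pow_mul_sub_one_add_one (k : ℕ) :
    σ 1 (p ^ k) * (p - 1) + 1 = p ^ (k + 1) := by
  have hp1 : p - 1 + 1 = p := Nat.sub_add_cancel hp.one_le
  simpa only [sigma_one_apply_prime_pow hp, hp1] using geom_sum_mul_add (p - 1) (k + 1)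

theorem sigma_one_mul_of_not_dvd {a : ℕ} (ha : ¬ p ∣ a) : σ 1 (a * p) = σ 1 a * (p + 1) := by
  rw [isMultiplicative_sigma.map_mul_of_coprime ((hp.coprime_iff_not_dvd.2 ha).symm),
    hp.sigma_one_eq]

end Nat.Prime

theorem guy_shanks_form_one_general (m q p : ℕ)
    (hq : q = 3 ^ (m + 1) - 4) (hp : p = (3 ^ m * q - 1) / 2)
    (hqp : q.Prime) (hpp : p.Prime) :
    σ 1 (2 * p) = σ 1 (3 ^ m * q) ∧ 2 * p + 1 = 3 ^ m * q := by
  have hq4 : 3 * 3 ^ m = q + 4 := by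
    have := hqp.two_le
    rw [pow_succ'] at hq
    omega
  have hm : m ≠ 0 := by rintro rfl; omega
  have hqodd : Odd q := by
    have h : Odd (q + 4) := by
      rw [← hq4, ← pow_succ']; exact Odd.pow (by decide)
    exact (Nat.odd_add.1 h).2 (by decide)
  have hn : 2 * p + 1 = 3 ^ m * q := by
    obtain ⟨k, hk⟩ := Nat.odd_mul.2 ⟨Odd.pow (by decide : Odd 3), hqodd⟩
    rw [hp, hk]
    omega
  refine ⟨?_, hn⟩
  have hp2 : ¬ p ∣ 2 := by
    rw [Nat.prime_dvd_prime_iff_eq hpp Nat.prime_two]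
    have : 6 ≤ 3 ^ m * q := Nat.mul_le_mul (Nat.le_self_pow hm 3) hqp.two_le
    omega
  have hq3 : ¬ q ∣ 3 ^ m := fun h => by
    have := (Nat.prime_dvd_prime_iff_eq hqp Nat.prime_three).1 (hqp.dvd_of_dvd_pow h)
    omega
  have hσ := Nat.prime_three.sigma_one_pow_mul_sub_one_add_one m
  rw [hpp.sigma_one_mul_of_not_dvd hp2, hqp.sigma_one_mul_of_not_dvd hq3,
    Nat.prime_two.sigma_one_eq]
  apply Nat.eq_of_mul_eq_mul_left two_pos
  linear_combination 3 * hn - hq4 - (q + 1) * hσ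

/-- Guy–Shanks form (1): if `q = 3^(m+1) - 4` and `p = (3^m * q - 1) / 2` are both
prime, then `n = 2 * p` is a solution of the Erdős–Sierpiński problem with
`n + 1 = 3^m * q`. -/
theorem guy_shanks_form_one (m q p : ℕ) (hm : 0 < m)
    (hq : q = 3 ^ (m + 1) - 4) (hp : p = (3 ^ m * q - 1) / 2)
    (hqp : q.Prime) (hpp : p.Prime) :
    σ 1 (2 * p) = σ 1 (3 ^ m * q) ∧ 2 * p + 1 = 3 ^ m * q :=
  guy_shanks_form_one_general m q p hq hp hqp hpp
end

section
/- Let m be an integer with m ≥ 2 and set q = 3^(m+1) − 10 and p = (3^m · q + 1)/2. If q and p are both prime numbers, then n = 3^m · q is a solution of the Erdős–Sierpiński problem with n + 1 = 2·p; that is, σ(3^m · q) = σ(2·p) and 3^m · q + 1 = 2·p. -/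
/-!
Since `3 ^ (m + 1) = q + 10`, the geometric sum gives `2 σ(3^m) = 3^(m+1) - 1 = q + 9`, and
`q ≡ 2 (mod 3)`, so multiplicativity yields `2 σ(3^m q) = (q + 9)(q + 1) = q (q + 10) + 9`.
On the other side `2 σ(2p) = 6 (p + 1) = 3 (3^m q + 1) + 6 = 3^(m+1) q + 9`, the same number.
-/

open ArithmeticFunction
open scoped ArithmeticFunction.sigma

namespace ArithmeticFunction

theorem sigma_one_apply_prime {p : ℕ} (hp : p.Prime) : σ 1 p = p + 1 := by
  simpa [Finset.sum_range_succ, add_comm] using sigma_one_apply_prime_pow (i := 1) hp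

theorem sigma_one_mul_prime {n q : ℕ} (hq : q.Prime) (hnq : n.Coprime q) :
    σ 1 (n * q) = σ 1 n * (q + 1) := by
  rw [isMultiplicative_sigma.map_mul_of_coprime hnq, sigma_one_apply_prime hq]

theorem two_mul_sigma_one_three_pow_add_one (m : ℕ) : 2 * σ 1 (3 ^ m) + 1 = 3 ^ (m + 1) := by
  rw [sigma_one_apply_prime_pow Nat.prime_three, mul_comm]
  exact geom_sum_mul_add 2 (m + 1)

theorem sigma_one_three_pow_mul_eq_sigma_one_two_mul {m q p : ℕ} (hq : q.Prime) (hp : p.Prime)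
    (hq10 : q + 10 = 3 ^ (m + 1)) (h2p : 3 ^ m * q + 1 = 2 * p) :
    σ 1 (3 ^ m * q) = σ 1 (2 * p) := by
  rw [pow_succ'] at hq10
  have h3q : ¬ 3 ∣ q := fun h => by omega
  have hp2 : p ≠ 2 := by
    rintro rfl
    obtain rfl : q = 3 :=
      (Nat.prime_dvd_prime_iff_eq hq Nat.prime_three).mp (Dvd.intro_left (3 ^ m) (by omega))
    exact h3q dvd_rfl
  have hcop3 : (3 ^ m).Coprime q :=
    ((Nat.Prime.coprime_iff_not_dvd Nat.prime_three).mpr h3q).pow_left m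
  have hcop2 : Nat.Coprime 2 p := (Nat.coprime_primes Nat.prime_two hp).mpr hp2.symm
  rw [sigma_one_mul_prime hq hcop3, sigma_one_mul_prime hp hcop2, show σ 1 2 = 3 by decide]
  have hσ3 := two_mul_sigma_one_three_pow_add_one m
  rw [pow_succ'] at hσ3
  apply Nat.eq_of_mul_eq_mul_left two_pos
  nlinarith

end ArithmeticFunction

theorem guy_shanks_form_two_general (m q p : ℕ)
    (hq : q = 3 ^ (m + 1) - 10) (hp : p = (3 ^ m * q + 1) / 2)
    (hqp : q.Prime) (hpp : p.Prime) :
    σ 1 (3 ^ m * q) = σ 1 (2 * p) ∧ 3 ^ m * q + 1 = 2 * p := by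
  have hq10 : q + 10 = 3 ^ (m + 1) := by
    have := hqp.two_le
    omega
  have hqodd : Odd q := by
    have : Odd (q + 10) := hq10 ▸ Odd.pow (by decide)
    exact (Nat.odd_add.mp this).mpr (by decide)
  have h2p : 3 ^ m * q + 1 = 2 * p := by
    obtain ⟨k, hk⟩ := (Odd.pow (by decide : Odd 3) : Odd (3 ^ m)).mul hqodd
    omega
  exact ⟨sigma_one_three_pow_mul_eq_sigma_one_two_mul hqp hpp hq10 h2p, h2p⟩

/-- Guy–Shanks form (2): if `q = 3^(m+1) - 10` and `p = (3^m * q + 1) / 2` are both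
prime, then `n = 3^m * q` is a solution of the Erdős–Sierpiński problem with
`n + 1 = 2 * p`. -/
theorem guy_shanks_form_two (m q p : ℕ) (hm : 2 ≤ m)
    (hq : q = 3 ^ (m + 1) - 10) (hp : p = (3 ^ m * q + 1) / 2)
    (hqp : q.Prime) (hpp : p.Prime) :
    σ 1 (3 ^ m * q) = σ 1 (2 * p) ∧ 3 ^ m * q + 1 = 2 * p :=
  guy_shanks_form_two_general m q p hq hp hqp hpp
end
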